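/- Let L be a finite-dimensional Lie algebra over a field F with radical R = R(L). Then E†(L) ⊆ C_L(R). -/

import Mathlib

/-!
Let `A` be quasi-minimal with centre `Z`, and `R` the radical. By minimality of `A/Z`, the ideal
`Z + (A ∩ R)` is either `Z` or `A`. In the second case `A = A² = [Z + A ∩ R, A] ⊆ R`, so the
perfect ideal `A` is solvable, hence zero, contradicting `Z < A`. In the first case
`[A, R] ⊆ A ∩ R ⊆ Z`, and the Jacobi identity gives `[A², R] = 0`; since `A = A²`, `A`
centralises `R`. Thus every generator of `E†(L)` lies in the ideal `C_L(R)`.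
-/

namespace Paper

open LieAlgebra

section AlgDefs

variable (F : Type*) [Field F] (L : Type*) [LieRing L] [LieAlgebra F L]

/-- The nilradical of a Lie algebra: the largest nilpotent ideal (the sup of nilpotent ideals). -/
noncomputable def nilrad : LieIdeal F L :=
  sSup {I : LieIdeal F L | LieRing.IsNilpotent I}

/-- The nilpotency class of a Lie algebra. -/
noncomputable def nilClass : ℕ := sInf {k | LieModule.lowerCentralSeries F L L k = ⊥}

/-- A Lie algebra is nilregular if the field has characteristic zero, or characteristic `p > 0`
and its nilradical has nilpotency class less than `p - 1`. -/
noncomputable def Nilregular : Prop :=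
  ringChar F = 0 ∨ nilClass F (nilrad F L) < ringChar F - 1

/-- A Lie algebra is solregular if the field has characteristic zero, or characteristic `p > 0`
and its radical has derived length less than `log₂ p`. -/
noncomputable def Solregular : Prop :=
  ringChar F = 0 ∨ 2 ^ LieAlgebra.derivedLength F (LieAlgebra.radical F L) < ringChar F

/-- Regular means nilregular or solregular. -/
noncomputable def Regular : Prop := Nilregular F L ∨ Solregular F L

end AlgDefs

section IdealDefs

variable {F : Type*} [Field F] {L : Type*} [LieRing L] [LieAlgebra F L]

/-- The centraliser `C_L(I)` of an ideal `I`, as an ideal of `L`. -/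
def centralizer (I : LieIdeal F L) : LieIdeal F L where
  carrier := {x : L | ∀ y ∈ I, ⁅x, y⁆ = 0}
  zero_mem' := by intro y hy; simp
  add_mem' := by intro a b ha hb y hy; rw [add_lie, ha y hy, hb y hy, add_zero]
  smul_mem' := by intro c x hx y hy; rw [smul_lie, hx y hy, smul_zero]
  lie_mem := by
    intro x m hm y hy
    have h1 : ⁅x, ⁅m, y⁆⁆ = (0 : L) := by rw [hm y hy, lie_zero]
    have h2 : ⁅m, ⁅x, y⁆⁆ = (0 : L) := hm _ (I.lie_mem hy)
    show ⁅⁅x, m⁆, y⁆ = (0 : L)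
    rw [lie_lie, h1, h2, sub_zero]

/-- The centre `Z(I)` of an ideal `I`, as an ideal of `L`. -/
def idealCenter (I : LieIdeal F L) : LieIdeal F L where
  carrier := {x : L | x ∈ I ∧ ∀ y ∈ I, ⁅x, y⁆ = 0}
  zero_mem' := ⟨I.zero_mem, by intro y hy; simp⟩
  add_mem' := by
    intro a b ha hb
    exact ⟨I.add_mem ha.1 hb.1, fun y hy => by rw [add_lie, ha.2 y hy, hb.2 y hy, add_zero]⟩
  smul_mem' := by
    intro c x hx
    exact ⟨I.smul_mem c hx.1, fun y hy => by rw [smul_lie, hx.2 y hy, smul_zero]⟩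
  lie_mem := by
    intro x m hm
    refine ⟨I.lie_mem hm.1, fun y hy => ?_⟩
    have h1 : ⁅x, ⁅m, y⁆⁆ = (0 : L) := by rw [hm.2 y hy, lie_zero]
    have h2 : ⁅m, ⁅x, y⁆⁆ = (0 : L) := hm.2 _ (I.lie_mem hy)
    show ⁅⁅x, m⁆, y⁆ = (0 : L)
    rw [lie_lie, h1, h2, sub_zero]

/-- The centraliser `C_L(A/B)` of a chief factor, as an ideal of `L`. -/
def chiefCentralizer (A B : LieIdeal F L) : LieIdeal F L where
  carrier := {x : L | ∀ a ∈ A, ⁅x, a⁆ ∈ B}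
  zero_mem' := by intro a ha; simp [B.zero_mem]
  add_mem' := by intro x y hx hy a ha; rw [add_lie]; exact B.add_mem (hx a ha) (hy a ha)
  smul_mem' := by intro c x hx a ha; rw [smul_lie]; exact B.smul_mem c (hx a ha)
  lie_mem := by
    intro x m hm a ha
    show ⁅⁅x, m⁆, a⁆ ∈ B
    rw [lie_lie]
    exact B.sub_mem (B.lie_mem (hm a ha)) (hm _ (A.lie_mem ha))

/-- `A/Z` is a minimal ideal of `L/Z` (via the ideal correspondence). -/
def IsMinModIdeal (Z A : LieIdeal F L) : Prop :=
  Z < A ∧ ∀ B : LieIdeal F L, Z ≤ B → B ≤ A → B = Z ∨ B = A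

/-- `A` is a minimal ideal of `L`. -/
def IsMinimalIdeal (A : LieIdeal F L) : Prop := IsMinModIdeal ⊥ A

/-- An ideal `A` of `L` is quasi-minimal if `A² = A` and `A/Z(A)` is a minimal ideal
of `L/Z(A)`. -/
def IsQuasiMinimal (A : LieIdeal F L) : Prop :=
  ⁅A, A⁆ = A ∧ IsMinModIdeal (idealCenter A) A

end IdealDefs

section MoreDefs

variable (F : Type*) [Field F] (L : Type*) [LieRing L] [LieAlgebra F L]

/-- `E†(L)`: the subalgebra generated by the quasi-minimal components of `L`. -/
noncomputable def Edagger : LieSubalgebra F L :=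
  LieSubalgebra.lieSpan F L (⋃ A ∈ {A : LieIdeal F L | IsQuasiMinimal A}, (A : Set L))

/-- `N†(L) = N(L) + E†(L)`: the quasi-minimal radical of `L`. -/
noncomputable def Ndagger : LieSubalgebra F L :=
  LieIdeal.toLieSubalgebra F L (nilrad F L) ⊔ Edagger F L

/-- The generalised nilradical `N*(L)`: the ideal containing `N = N(L)` with
`N*(L)/N` the sum of all minimal ideals of `L/N` contained in `(N + C_L(N))/N`. -/
noncomputable def Nstar : LieIdeal F L :=
  nilrad F L ⊔ sSup {A : LieIdeal F L | IsMinModIdeal (nilrad F L) A ∧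
    A ≤ nilrad F L ⊔ centralizer (nilrad F L)}

/-- The Frattini ideal: the largest ideal contained in every maximal subalgebra. -/
def frattini : LieIdeal F L :=
  sSup {I : LieIdeal F L | ∀ M : LieSubalgebra F L, IsCoatom M → (I : Set L) ⊆ M}

/-- `Ñ(L)`: the ideal with `Ñ(L)/φ(L) = Soc (L/φ(L))`. -/
noncomputable def Ntilde : LieIdeal F L :=
  frattini F L ⊔ sSup {A : LieIdeal F L | IsMinModIdeal (frattini F L) A}

/-- A characteristic ideal: one invariant under all derivations. -/
def IsCharIdeal (J : LieIdeal F L) : Prop :=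
  ∀ D : LieDerivation F L L, ∀ x ∈ J, D x ∈ J

/-- The characteristic radical `R_c(L)`: the sum of all solvable characteristic ideals. -/
noncomputable def charRadical : LieIdeal F L :=
  sSup {J : LieIdeal F L | LieAlgebra.IsSolvable J ∧ IsCharIdeal F L J}

/-- A subideal: a subalgebra joined to `L` by a chain of successive ideals. -/
def IsSubideal (S : LieSubalgebra F L) : Prop :=
  ∃ n : ℕ, ∃ c : Fin (n + 1) → LieSubalgebra F L,
    c 0 = S ∧ c (Fin.last n) = ⊤ ∧
    ∀ i : Fin n, c i.castSucc ≤ c i.succ ∧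
      ∀ x ∈ c i.succ, ∀ y ∈ c i.castSucc, ⁅x, y⁆ ∈ c i.castSucc

end MoreDefs

open LieSubmodule

theorem LieIdeal.eq_bot_of_lie_self_eq_self {R L : Type*} [CommRing R] [LieRing L]
    [LieAlgebra R L] {I : LieIdeal R L} [IsSolvable I] (hI : ⁅I, I⁆ = I) : I = ⊥ := by
  obtain ⟨k, hk⟩ := (isSolvable_iff R I).mp inferInstance
  have hconst : ∀ n, derivedSeriesOfIdeal R L n I = I := by
    intro n
    induction n with
    | zero => rfl
    | succ n ih => rw [derivedSeriesOfIdeal_succ, ih, hI]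
  rwa [LieIdeal.derivedSeries_eq_bot_iff, hconst] at hk

section

variable {F : Type*} [Field F] {L : Type*} [LieRing L] [LieAlgebra F L]

theorem idealCenter_le (A : LieIdeal F L) : idealCenter A ≤ A := fun _ hx => hx.1

theorem idealCenter_lie_eq_bot (A : LieIdeal F L) : ⁅idealCenter A, A⁆ = ⊥ :=
  (lie_eq_bot_iff _ _).mpr fun _ hx => hx.2

theorem le_of_le_idealCenter_sup {A J : LieIdeal F L} (hA : ⁅A, A⁆ = A)
    (h : A ≤ idealCenter A ⊔ J) : A ≤ J :=
  calc A = ⁅A, A⁆ := hA.symm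
    _ ≤ ⁅idealCenter A ⊔ J, A⁆ := mono_lie_left A h
    _ = ⁅J, A⁆ := by rw [sup_lie, idealCenter_lie_eq_bot, bot_sup_eq]
    _ ≤ J := lie_le_left J A

/-- A form of the three subgroups lemma. -/
theorem lie_self_le_centralizer {A I : LieIdeal F L} (h : ⁅A, I⁆ ≤ idealCenter A) :
    ⁅A, A⁆ ≤ centralizer I := by
  rw [lie_le_iff]
  intro a ha b hb r hr
  have ha_br : ⁅a, ⁅b, r⁆⁆ = 0 := by
    rw [← lie_skew, (h (lie_mem_lie hb hr)).2 a ha, neg_zero]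
  have hb_ar : ⁅b, ⁅a, r⁆⁆ = 0 := by
    rw [← lie_skew, (h (lie_mem_lie ha hr)).2 b hb, neg_zero]
  rw [lie_lie, ha_br, hb_ar, sub_zero]

theorem IsQuasiMinimal.le_centralizer_radical [IsNoetherian F L] {A : LieIdeal F L}
    (hA : IsQuasiMinimal A) : A ≤ centralizer (radical F L) := by
  obtain ⟨hperfect, hcenter_lt, hminimal⟩ := hA
  rcases hminimal (idealCenter A ⊔ A ⊓ radical F L) le_sup_left
    (sup_le (idealCenter_le A) inf_le_left) with h | h
  · have hbracket : ⁅A, radical F L⁆ ≤ idealCenter A :=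
      (lie_le_inf A _).trans (le_sup_right.trans h.le)
    rw [← hperfect]
    exact lie_self_le_centralizer hbracket
  · have hle : A ≤ radical F L :=
      le_of_le_idealCenter_sup hperfect (h.ge.trans (sup_le_sup_left inf_le_right _))
    have : IsSolvable A := (LieIdeal.solvable_iff_le_radical F L A).mpr hle
    have hbot := LieIdeal.eq_bot_of_lie_self_eq_self hperfect
    exact absurd hcenter_lt (hbot ▸ not_lt_bot)

end

/-- `E†(L) ⊆ C_L(R)`. -/
theorem stmt_10 (F : Type*) [Field F] (L : Type*) [LieRing L] [LieAlgebra F L]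
    [FiniteDimensional F L] :
    (Edagger F L : Set L) ⊆ (centralizer (LieAlgebra.radical F L) : Set L) :=
  LieSubalgebra.lieSpan_le (K := (centralizer (radical F L)).toLieSubalgebra).mpr <|
    Set.iUnion₂_subset fun _ (hA : IsQuasiMinimal _) => hA.le_centralizer_radical

end Paper
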